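/- A Poisson random variable Q with mean γC, for a single slot, satisfies the lower bound on outage of a proactive network with window T: limsup as C→∞ of -(1/C)·log P(Q > C(T+1)) is at most (T+1)(γ/(T+1) - 1 + log((T+1)/γ)). -/

import Mathlib

/-! The tail is bounded below by its single term at `k = (T + 1) C + 1`. Stirling's upper bound
on `k!` shows that this Poisson weight is `exp (-poissonRate (γ C) k)` up to a factor `e √k`,
and the rate scales linearly, `poissonRate (γ C) (x C) = poissonRate γ x * C`. So the exponent
divided by `C` tends to `poissonRate γ (T + 1)`, which is the claimed bound. -/

open Filter Real Topology

noncomputable def poisP (l : ℝ) (k : ℕ) : ℝ := Real.exp (-l) * l ^ k / (Nat.factorial k)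

noncomputable def poissonTail (l : ℝ) (a : ℝ) : ℝ :=
  ∑' k : ℕ, if a < (k : ℝ) then poisP l k else 0

/-- Cramér's rate function of a Poisson law of mean `γ`, evaluated at `x`. -/
noncomputable def poissonRate (γ x : ℝ) : ℝ := γ - x + x * log (x / γ)

lemma poissonRate_mul_right (γ x : ℝ) {c : ℝ} (hc : c ≠ 0) :
    poissonRate (γ * c) (x * c) = poissonRate γ x * c := by
  rw [poissonRate, poissonRate, mul_div_mul_right _ _ hc]
  ring

lemma continuousAt_poissonRate {γ x : ℝ} (hγ : γ ≠ 0) (hx : x ≠ 0) :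
    ContinuousAt (poissonRate γ) x := by
  unfold poissonRate
  have : ContinuousAt (fun y => log (y / γ)) x :=
    (continuousAt_id.div_const γ).log (div_ne_zero hx hγ)
  fun_prop

lemma poisP_pos {l : ℝ} (hl : 0 < l) (k : ℕ) : 0 < poisP l k := by
  unfold poisP
  positivity

lemma poisP_nonneg {l : ℝ} (hl : 0 ≤ l) (k : ℕ) : 0 ≤ poisP l k := by
  unfold poisP
  positivity

lemma hasSum_poisP {l : ℝ} (hl : 0 ≤ l) : HasSum (poisP l) 1 := by
  lift l to NNReal using hl
  exact ProbabilityTheory.hasSum_one_poissonMeasure l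

lemma log_poisP {l : ℝ} (hl : 0 < l) (k : ℕ) :
    log (poisP l k) = -l + k * log l - log (Nat.factorial k) := by
  rw [poisP, log_div (by positivity) (by positivity), log_mul (exp_ne_zero _) (by positivity),
    log_exp, log_pow]

lemma log_factorial_le_stirling {n : ℕ} (hn : n ≠ 0) :
    log (Nat.factorial n) ≤ n * log n - n + log n / 2 + 1 := by
  obtain ⟨m, rfl⟩ := Nat.exists_eq_succ_of_ne_zero hn
  have h := Stirling.log_stirlingSeq'_antitone (Nat.zero_le m)
  simp only [Function.comp_apply, Nat.succ_eq_add_one, zero_add, Stirling.stirlingSeq_one,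
    Stirling.log_stirlingSeq_formula] at h
  have hm : (0 : ℝ) < (m + 1 : ℕ) := by positivity
  rw [log_div (exp_ne_zero 1) (by positivity), log_exp, log_sqrt zero_le_two,
    log_mul two_ne_zero hm.ne', log_div hm.ne' (exp_ne_zero 1), log_exp] at h
  linarith

lemma neg_log_poisP_le {l : ℝ} (hl : 0 < l) {k : ℕ} (hk : k ≠ 0) :
    -log (poisP l k) ≤ poissonRate l k + log k / 2 + 1 := by
  have hk' : (0 : ℝ) < k := by positivity
  rw [log_poisP hl, poissonRate, log_div hk'.ne' hl.ne']
  linarith [log_factorial_le_stirling hk]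

lemma summable_poissonTail_terms {l : ℝ} (hl : 0 ≤ l) (a : ℝ) :
    Summable fun k : ℕ => if a < (k : ℝ) then poisP l k else 0 :=
  (hasSum_poisP hl).summable.of_nonneg_of_le
    (fun k => by split_ifs <;> [exact poisP_nonneg hl k; exact le_rfl])
    (fun k => by split_ifs <;> [exact le_rfl; exact poisP_nonneg hl k])

lemma poissonTail_nonneg {l : ℝ} (hl : 0 ≤ l) (a : ℝ) : 0 ≤ poissonTail l a :=
  tsum_nonneg fun k => by split_ifs <;> [exact poisP_nonneg hl k; exact le_rfl]

lemma poissonTail_le_one {l : ℝ} (hl : 0 ≤ l) (a : ℝ) : poissonTail l a ≤ 1 :=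
  hasSum_le (fun k => by split_ifs <;> [exact le_rfl; exact poisP_nonneg hl k])
    (summable_poissonTail_terms hl a).hasSum (hasSum_poisP hl)

lemma log_poissonTail_nonpos {l : ℝ} (hl : 0 ≤ l) (a : ℝ) : log (poissonTail l a) ≤ 0 :=
  log_nonpos (poissonTail_nonneg hl a) (poissonTail_le_one hl a)

lemma poisP_le_poissonTail {l a : ℝ} (hl : 0 ≤ l) {k : ℕ} (hk : a < k) :
    poisP l k ≤ poissonTail l a := by
  have h := (summable_poissonTail_terms hl a).le_tsum k
    (fun j _ => by split_ifs <;> [exact poisP_nonneg hl j; exact le_rfl])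
  rwa [if_pos hk] at h

lemma neg_log_poissonTail_le {l a : ℝ} (hl : 0 < l) {k : ℕ} (hk : k ≠ 0) (hak : a < k) :
    -log (poissonTail l a) ≤ poissonRate l k + log k / 2 + 1 := by
  linarith [neg_log_poisP_le hl hk, log_le_log (poisP_pos hl k) (poisP_le_poissonTail hl.le hak)]

lemma tendsto_poissonRate_mul_div {γ x : ℝ} (hγ : γ ≠ 0) (hx : x ≠ 0) {k : ℕ → ℝ}
    (hk : Tendsto (fun C : ℕ => k C / C) atTop (𝓝 x)) :
    Tendsto (fun C : ℕ => (poissonRate (γ * C) (k C) + log (k C) / 2 + 1) / C) atTop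
      (𝓝 (poissonRate γ x)) := by
  have hC : Tendsto (fun C : ℕ => (C : ℝ)) atTop atTop := tendsto_natCast_atTop_atTop
  have hlogC : Tendsto (fun C : ℕ => log C / C) atTop (𝓝 0) :=
    isLittleO_log_id_atTop.tendsto_div_nhds_zero.comp hC
  have hlim := ((continuousAt_poissonRate hγ hx).tendsto.comp hk).add
    ((((continuousAt_log hx).tendsto.comp hk).div_const 2).add_const 1 |>.div_atTop hC) |>.add
    (hlogC.div_const 2)
  rw [zero_div, add_zero, add_zero] at hlim
  refine hlim.congr' ?_
  filter_upwards [hk.eventually_ne hx, eventually_ne_atTop 0] with C ha hC0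
  have hC0 : (C : ℝ) ≠ 0 := Nat.cast_ne_zero.mpr hC0
  have hkC : k C = k C / C * C := (div_mul_cancel₀ _ hC0).symm
  simp only [Function.comp_apply]
  rw [hkC, poissonRate_mul_right _ _ hC0, log_mul ha hC0, ← hkC]
  field_simp
  ring

theorem poisson_linear_prediction_diversity_upper_general (γ : ℝ) (hγ0 : 0 < γ) (T : ℕ) :
    Filter.limsup (fun C : ℕ =>
        -(1 / (C : ℝ)) * Real.log (poissonTail (γ * C) ((C : ℝ) * ((T : ℝ) + 1)))) atTop ≤
      ((T : ℝ) + 1) * (γ / ((T : ℝ) + 1) - 1 + Real.log (((T : ℝ) + 1) / γ)) := by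
  set k : ℕ → ℕ := fun C => (T + 1) * C + 1
  have hk : Tendsto (fun C : ℕ => (k C : ℝ) / C) atTop (𝓝 ((T : ℝ) + 1)) := by
    have h := tendsto_one_div_atTop_nhds_zero_nat.const_add ((T : ℝ) + 1)
    rw [add_zero] at h
    refine h.congr' ?_
    filter_upwards [eventually_ne_atTop 0] with C hC
    simp only [k]
    push_cast
    field_simp
  have hbound : ∀ᶠ C : ℕ in atTop,
      -(1 / (C : ℝ)) * log (poissonTail (γ * C) ((C : ℝ) * ((T : ℝ) + 1))) ≤
        (poissonRate (γ * C) (k C) + log (k C) / 2 + 1) / C := by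
    filter_upwards [eventually_gt_atTop 0] with C hC
    have hl : 0 < γ * C := by positivity
    have hak : (C : ℝ) * ((T : ℝ) + 1) < k C := by simp only [k]; push_cast; linarith
    rw [neg_mul, one_div_mul_eq_div, ← neg_div]
    exact div_le_div_of_nonneg_right (neg_log_poissonTail_le hl (by positivity) hak) (by positivity)
  have hnonneg : ∀ C : ℕ,
      0 ≤ -(1 / (C : ℝ)) * log (poissonTail (γ * C) ((C : ℝ) * ((T : ℝ) + 1))) := fun C =>
    mul_nonneg_of_nonpos_of_nonpos (by simp only [neg_nonpos]; positivity)
      (log_poissonTail_nonpos (by positivity) _)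
  have hrate := tendsto_poissonRate_mul_div hγ0.ne' (by positivity) (k := fun C => (k C : ℝ)) hk
  calc _ ≤ _ := limsup_le_limsup hbound (isCoboundedUnder_le_of_le atTop hnonneg)
          hrate.isBoundedUnder_le
    _ = poissonRate γ ((T : ℝ) + 1) := hrate.limsup_eq
    _ = _ := by rw [poissonRate]; field_simp

/-- For `Q` Poisson with mean `γC`, the limsup as `C → ∞` of
`-(1/C)·log P(Q > C(T+1))` is at most `(T+1)(γ/(T+1) - 1 + log((T+1)/γ))`. -/
theorem poisson_linear_prediction_diversity_upper (γ : ℝ) (hγ0 : 0 < γ) (hγ1 : γ < 1) (T : ℕ) :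
    Filter.limsup (fun C : ℕ =>
        -(1 / (C : ℝ)) * Real.log (poissonTail (γ * C) ((C : ℝ) * ((T : ℝ) + 1)))) atTop ≤
      ((T : ℝ) + 1) * (γ / ((T : ℝ) + 1) - 1 + Real.log (((T : ℝ) + 1) / γ)) :=
  poisson_linear_prediction_diversity_upper_general γ hγ0 T
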